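/- There is an absolute constant c > 0 such that for every n ≥ 1 and N = 2ⁿ, there exists a 2D SLP of size at most c·n deriving the 2D string Bin_N. -/

import Mathlib

/-!
## Two-dimensional strings.
A 2D string over alphabet `A` of size `h × w` is represented canonically:
`f i j` is `some` of the character in (0-indexed) row `i`, column `j` when
`i < h` and `j < w`, and `none` outside of the rectangle.  All operations
below produce such canonical representations, so equality of 2D strings
built from them coincides with equality of the dimensions and of all entries.
-/
structure Str2 (A : Type) where
  h : ℕ
  w : ℕ
  f : ℕ → ℕ → Option A

namespace Str2

variable {A : Type}

/-- Canonical constructor: pads with `none` outside of the `h × w` rectangle. -/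
def mk' (h w : ℕ) (g : ℕ → ℕ → Option A) : Str2 A :=
  ⟨h, w, fun i j => if i < h ∧ j < w then g i j else none⟩

/-- The empty 2D string. -/
def empty : Str2 A := ⟨0, 0, fun _ _ => none⟩

/-- The `1 × 1` 2D string consisting of a single character. -/
def single (a : A) : Str2 A := mk' 1 1 fun _ _ => some a

/-- Horizontal concatenation `S ⊞ T` (meaningful when the heights agree). -/
def hcat (S T : Str2 A) : Str2 A :=
  mk' S.h (S.w + T.w) fun i j => if j < S.w then S.f i j else T.f i (j - S.w)

/-- Vertical concatenation `S ⊟ T` (meaningful when the widths agree). -/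
def vcat (S T : Str2 A) : Str2 A :=
  mk' (S.h + T.h) S.w fun i j => if i < S.h then S.f i j else T.f (i - S.h) j

/-- Horizontal concatenation `S₁ ⊞ S₂ ⊞ ⋯ ⊞ S_k` of a list of 2D strings. -/
def hcatList : List (Str2 A) → Str2 A
  | [] => empty
  | S :: rest => rest.foldl hcat S

/-- Vertical concatenation `S₁ ⊟ S₂ ⊟ ⋯ ⊟ S_k` of a list of 2D strings. -/
def vcatList : List (Str2 A) → Str2 A
  | [] => empty
  | S :: rest => rest.foldl vcat S

/-- The transpose. -/
def transpose (S : Str2 A) : Str2 A := mk' S.w S.h fun i j => S.f j i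

/-- The `i`-th row (0-indexed) of `S`, as a `1 × w` 2D string. -/
def rowStr (S : Str2 A) (i : ℕ) : Str2 A := mk' 1 S.w fun _ j => S.f i j

/-- The `j`-th column (0-indexed) of `S`, read top to bottom, as a `1 × h` 2D string. -/
def colStr (S : Str2 A) (j : ℕ) : Str2 A := mk' 1 S.h fun _ i => S.f i j

/-- A height-one 2D string, viewed as an ordinary (1D) string, i.e. a list. -/
def toList (S : Str2 A) : List A := (List.range S.w).filterMap fun j => S.f 0 j

/-- An ordinary (1D) string viewed as a height-one 2D string. -/
def ofList (l : List A) : Str2 A := mk' 1 l.length fun _ j => l[j]?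

/-- The concatenation of all rows of `S` from top to bottom,
as a height-one 2D string of width `h * w`. -/
def rowsConcat (S : Str2 A) : Str2 A :=
  mk' 1 (S.h * S.w) fun _ j => S.f (j / S.w) (j % S.w)

end Str2

/-- The right-hand side of a production of a 2D SLP: a single character,
a horizontal concatenation of two nonterminals, or a vertical concatenation
of two nonterminals. -/
inductive Rhs2 (A V : Type) where
  | chr : A → Rhs2 A V
  | horiz : V → V → Rhs2 A V
  | vert : V → V → Rhs2 A V

/-- A two-dimensional straight-line program over the alphabet `A`:
a finite set `V` of nonterminals, a starting nonterminal, and a production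
map `rhs`.  Acyclicity of the relation "appears in the right-hand side of"
is witnessed by the function `rank`, which strictly decreases from the
left-hand side of each production to the nonterminals on its right-hand side. -/
structure SLP2 (A : Type) where
  V : Type
  fintypeV : Fintype V
  start : V
  rhs : V → Rhs2 A V
  rank : V → ℕ
  rank_horiz : ∀ {X Y Z}, rhs X = Rhs2.horiz Y Z → rank Y < rank X ∧ rank Z < rank X
  rank_vert : ∀ {X Y Z}, rhs X = Rhs2.vert Y Z → rank Y < rank X ∧ rank Z < rank X

namespace SLP2

variable {A : Type}

/-- Fuel-based evaluation of expansions (with enough fuel it computes the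
unique expansion of a nonterminal). -/
def expAux (G : SLP2 A) : ℕ → G.V → Str2 A
  | 0, _ => Str2.empty
  | n + 1, X =>
    match G.rhs X with
    | .chr a => Str2.single a
    | .horiz Y Z => (G.expAux n Y).hcat (G.expAux n Z)
    | .vert Y Z => (G.expAux n Y).vcat (G.expAux n Z)

/-- The (unique) expansion of a nonterminal `X`: since `rank` strictly
decreases along productions, fuel `rank X + 1` always suffices. -/
def expNT (G : SLP2 A) (X : G.V) : Str2 A := G.expAux (G.rank X + 1) X

/-- The 2D string derived by the SLP. -/
def exp (G : SLP2 A) : Str2 A := G.expNT G.start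

/-- Fuel-based computation of the depth of the derivation tree below a
nonterminal (a node labeled by a production `chr σ` has a single leaf child). -/
def depthAux (G : SLP2 A) : ℕ → G.V → ℕ
  | 0, _ => 0
  | n + 1, X =>
    match G.rhs X with
    | .chr _ => 1
    | .horiz Y Z => 1 + max (G.depthAux n Y) (G.depthAux n Z)
    | .vert Y Z => 1 + max (G.depthAux n Y) (G.depthAux n Z)

/-- The depth of the derivation tree below nonterminal `X`. -/
def depthNT (G : SLP2 A) (X : G.V) : ℕ := G.depthAux (G.rank X + 1) X

/-- The depth of the SLP: the depth of its derivation tree. -/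
def depth (G : SLP2 A) : ℕ := G.depthNT G.start

/-- The size of the SLP: the total number of symbols on the right-hand
sides of all productions. -/
def size (G : SLP2 A) : ℕ :=
  letI := G.fintypeV
  ∑ X : G.V, (match G.rhs X with
    | .chr _ => 1
    | .horiz _ _ => 2
    | .vert _ _ => 2)

/-- The number of nonterminals of the SLP. -/
def numNT (G : SLP2 A) : ℕ :=
  letI := G.fintypeV
  Fintype.card G.V

/-- Well-formedness: dimensions match in every production, i.e. in a
horizontal concatenation both arguments have equal heights, and in a
vertical concatenation both arguments have equal widths. -/
def WF (G : SLP2 A) : Prop :=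
  ∀ X : G.V,
    match G.rhs X with
    | .chr _ => True
    | .horiz Y Z => (G.expNT Y).h = (G.expNT Z).h
    | .vert Y Z => (G.expNT Y).w = (G.expNT Z).w

/-- A 1D SLP: a 2D SLP that uses only horizontal concatenations and derives
a string of height `1`. -/
def OneDim (G : SLP2 A) : Prop :=
  (∀ X Y Z, G.rhs X ≠ Rhs2.vert Y Z) ∧ (G.exp).h = 1

end SLP2
/-- The alphabet `{0, 1, $}`. -/
inductive Alpha3 : Type where
  | zero : Alpha3
  | one : Alpha3
  | dollar : Alpha3
deriving DecidableEq

instance : Fintype Alpha3 where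
  elems := {Alpha3.zero, Alpha3.one, Alpha3.dollar}
  complete := fun x => by cases x <;> simp

/-- For `N = 2^n`, the 2D string `Bin_N` of size `N × (n+2)` whose `i`-th row
(1-indexed) is the `n`-bit binary representation (most significant bit first)
of `i - 1`, surrounded by one `$` symbol on each side. -/
def binStr (n : ℕ) : Str2 Alpha3 :=
  Str2.mk' (2 ^ n) (n + 2) fun i j =>
    some (if j = 0 ∨ j = n + 1 then Alpha3.dollar
      else if Nat.testBit i (n - j) then Alpha3.one else Alpha3.zero)

/-- For `N = 2^n`, the 2D string `ShiftBin_N` of size `2N × N(n+2)`: for every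
`i ∈ [0..N-1]`, the columns `i(n+2)+1` through `(i+1)(n+2)` (1-indexed) consist
of `i` rows filled with `0`'s, followed by a copy of `Bin_N`, followed by
`N - i` rows filled with `0`'s. -/
def shiftBinStr (n : ℕ) : Str2 Alpha3 :=
  Str2.mk' (2 * 2 ^ n) (2 ^ n * (n + 2)) fun r c =>
    let i := c / (n + 2)
    if i ≤ r ∧ r < i + 2 ^ n then (binStr n).f (r - i) (c % (n + 2)) else some Alpha3.zero

/-- A binary string `b`, surrounded by one `$` symbol on each side, as a string
over an alphabet with distinguished symbols `z` (zero), `o` (one), `d` (dollar). -/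
def dollarWrap {A : Type} (z o d : A) (b : List Bool) : List A :=
  d :: (b.map fun x => if x then o else z) ++ [d]

/-- The exponent of `M'`: the largest `m` such that `M' = 2^m` satisfies
`M' * (log₂ M' + 2) ≤ M / 2`, i.e. `2 * 2^m * (m + 2) ≤ M`. -/
def mExp (M : ℕ) : ℕ := Nat.findGreatest (fun m => 2 * 2 ^ m * (m + 2) ≤ M) M

/-- The 2D string `C_{N,M}` of size `N × M`: with `M'` the largest power of two
such that `M' * (log₂ M' + 2) ≤ M / 2` and `B = ShiftBin_{M'}` (of size
`2M' × M'(log₂ M' + 2)`), it consists of a left block of `⌊N/(2M')⌋` vertically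
concatenated copies of `B` padded below with `0`'s to height `N`; to its right,
a right block of `M'` rows of `0`'s followed by `⌊(N-M')/(2M')⌋` vertically
concatenated copies of `B`, padded below with `0`'s to height `N`; and columns
of `0`'s padding the total width to `M`. -/
def gadgetC (N M : ℕ) : Str2 Alpha3 :=
  let n := mExp M
  let M' := 2 ^ n
  let W := M' * (n + 2)
  Str2.mk' N M fun r c =>
    if c < W then
      (if r < 2 * M' * (N / (2 * M')) then (shiftBinStr n).f (r % (2 * M')) c
       else some Alpha3.zero)
    else if c < 2 * W then
      (if M' ≤ r ∧ r < M' + 2 * M' * ((N - M') / (2 * M'))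
       then (shiftBinStr n).f ((r - M') % (2 * M')) (c - W)
       else some Alpha3.zero)
    else some Alpha3.zero

/-!
Let `B_k` be the `2^k × (k+1)` block whose `i`-th row is the `k`-bit binary representation
of `i` followed by `$`, and `a^m` a column of `m` copies of `a`, so that
`Bin_{2^n} = $^{2^n} ⊞ B_n`. Splitting the rows by their leading bit gives
`B_{k+1} = (0^{2^k} ⊞ B_k) ⊟ (1^{2^k} ⊞ B_k)` with `B_0 = $`, and `a^{2^{k+1}} = a^{2^k} ⊟ a^{2^k}`.
So one production for each `a^{2^k}`, `B_k` and `a^{2^k} ⊞ B_k` with `k ≤ n`, plus the start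
symbol, gives an SLP with `O(n)` nonterminals.
-/

namespace Str2

variable {A : Type}

theorem mk'_congr {h h' w w' : ℕ} {f g : ℕ → ℕ → Option A} (hh : h = h') (hw : w = w')
    (hfg : ∀ i < h, ∀ j < w, f i j = g i j) : mk' h w f = mk' h' w' g := by
  subst hh hw
  simp only [mk', mk.injEq, true_and]
  funext i j
  split_ifs with hij
  exacts [hfg i hij.1 j hij.2, rfl]

theorem mk'_hcat_mk' {h w w' : ℕ} (f g : ℕ → ℕ → Option A) :
    (mk' h w f).hcat (mk' h w' g) =
      mk' h (w + w') fun i j => if j < w then f i j else g i (j - w) := by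
  refine mk'_congr rfl rfl fun i hi j hj => ?_
  simp only [mk'] at *
  grind

theorem mk'_vcat_mk' {h h' w : ℕ} (f g : ℕ → ℕ → Option A) :
    (mk' h w f).vcat (mk' h' w g) =
      mk' (h + h') w fun i j => if i < h then f i j else g (i - h) j := by
  refine mk'_congr rfl rfl fun i hi j hj => ?_
  simp only [mk'] at *
  grind

def column (a : A) (m : ℕ) : Str2 A := mk' m 1 fun _ _ => some a

theorem column_vcat_column (a : A) (m m' : ℕ) :
    (column a m).vcat (column a m') = column a (m + m') := by
  simp only [column, mk'_vcat_mk', ite_self]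

end Str2

namespace Rhs2

variable {A V : Type}

def eval (E : V → Str2 A) : Rhs2 A V → Str2 A
  | chr a => Str2.single a
  | horiz Y Z => (E Y).hcat (E Z)
  | vert Y Z => (E Y).vcat (E Z)

end Rhs2

namespace SLP2

variable {A : Type} (G : SLP2 A)

theorem expAux_succ (f : ℕ) (X : G.V) : G.expAux (f + 1) X = (G.rhs X).eval (G.expAux f) := by
  rw [expAux]
  cases G.rhs X <;> rfl

theorem expNT_eq_of_eval {E : G.V → Str2 A} (hE : ∀ X, E X = (G.rhs X).eval E) :
    G.expNT = E := by
  suffices h : ∀ f X, G.rank X < f → G.expAux f X = E X from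
    funext fun X => h _ X (Nat.lt_succ_self _)
  intro f
  induction f with
  | zero => intro X h; omega
  | succ f ih =>
    intro X hX
    rw [expAux_succ, hE X]
    rcases hr : G.rhs X with a | ⟨Y, Z⟩ | ⟨Y, Z⟩
    · rfl
    · obtain ⟨hY, hZ⟩ := G.rank_horiz hr
      simp only [Rhs2.eval, ih Y (by omega), ih Z (by omega)]
    · obtain ⟨hY, hZ⟩ := G.rank_vert hr
      simp only [Rhs2.eval, ih Y (by omega), ih Z (by omega)]

theorem size_le_two_mul_numNT : G.size ≤ 2 * G.numNT := by
  let _ := G.fintypeV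
  calc G.size ≤ ∑ _X : G.V, 2 := Finset.sum_le_sum fun X _ => by split <;> omega
    _ = 2 * G.numNT := by simp [numNT, mul_comm]

end SLP2

def binBlock (k : ℕ) : Str2 Alpha3 :=
  Str2.mk' (2 ^ k) (k + 1) fun i j =>
    some (if j = k then .dollar else if i.testBit (k - 1 - j) then .one else .zero)

theorem binBlock_zero : binBlock 0 = Str2.single .dollar :=
  Str2.mk'_congr rfl rfl fun _ _ j hj => by simp [show j = 0 by omega]

theorem binBlock_succ (k : ℕ) :
    binBlock (k + 1) = ((Str2.column .zero (2 ^ k)).hcat (binBlock k)).vcat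
      ((Str2.column .one (2 ^ k)).hcat (binBlock k)) := by
  simp only [binBlock, Str2.column, Str2.mk'_hcat_mk', Str2.mk'_vcat_mk']
  refine Str2.mk'_congr (by ring) (by omega) fun i hi j hj => ?_
  rcases lt_or_ge i (2 ^ k) with hik | hik
  · have hlead : i.testBit k = false := Nat.testBit_lt_two_pow hik
    grind
  · obtain ⟨x, rfl⟩ := Nat.exists_eq_add_of_le hik
    have hx : x < 2 ^ k := by rw [pow_succ] at hi; omega
    have hlead : (2 ^ k + x).testBit k = true := by
      rw [Nat.testBit_two_pow_add_eq, Nat.testBit_lt_two_pow hx, Bool.not_false]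
    have hlow : ∀ m < k, (2 ^ k + x).testBit m = x.testBit m :=
      fun m hm => Nat.testBit_two_pow_add_gt hm x
    grind

theorem binStr_eq_column_hcat_binBlock (n : ℕ) :
    binStr n = (Str2.column .dollar (2 ^ n)).hcat (binBlock n) := by
  simp only [binStr, binBlock, Str2.column, Str2.mk'_hcat_mk']
  refine Str2.mk'_congr rfl (by omega) fun i hi j hj => ?_
  grind

def Alpha3.ofBool (b : Bool) : Alpha3 := if b then .one else .zero

inductive BinNT (n : ℕ) : Type where
  | col (a : Alpha3) (k : Fin (n + 1))
  | block (k : Fin (n + 1))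
  | pre (b : Bool) (k : Fin n)
  | start

namespace BinNT

variable {n : ℕ}

def equivSum : BinNT n ≃ (Alpha3 × Fin (n + 1)) ⊕ Fin (n + 1) ⊕ (Bool × Fin n) ⊕ Unit where
  toFun
    | col a k => .inl (a, k)
    | block k => .inr (.inl k)
    | pre b k => .inr (.inr (.inl (b, k)))
    | start => .inr (.inr (.inr ()))
  invFun
    | .inl (a, k) => col a k
    | .inr (.inl k) => block k
    | .inr (.inr (.inl (b, k))) => pre b k
    | .inr (.inr (.inr ())) => start
  left_inv X := by cases X <;> rfl
  right_inv s := by rcases s with ⟨_, _⟩ | _ | ⟨_, _⟩ | ⟨⟩ <;> rfl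

instance : Fintype (BinNT n) := Fintype.ofEquiv _ equivSum.symm

theorem card_eq : Fintype.card (BinNT n) = 6 * n + 5 := by
  rw [Fintype.card_congr equivSum]
  simp only [Fintype.card_sum, Fintype.card_prod, Fintype.card_fin, Fintype.card_bool,
    Fintype.card_unit]
  rw [show Fintype.card Alpha3 = 3 from rfl]
  ring

def rhs : BinNT n → Rhs2 Alpha3 (BinNT n)
  | col a ⟨0, _⟩ => .chr a
  | col a ⟨k + 1, h⟩ => .vert (col a ⟨k, by omega⟩) (col a ⟨k, by omega⟩)
  | block ⟨0, _⟩ => .chr .dollar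
  | block ⟨k + 1, h⟩ => .vert (pre false ⟨k, by omega⟩) (pre true ⟨k, by omega⟩)
  | pre b k => .horiz (col (Alpha3.ofBool b) k.castSucc) (block k.castSucc)
  | start => .horiz (col .dollar (Fin.last n)) (block (Fin.last n))

def rank : BinNT n → ℕ
  | col _ k => k
  | block k => 2 * k
  | pre _ k => 2 * k + 1
  | start => 2 * n + 1

theorem rank_lt_of_rhs {X Y Z : BinNT n} (h : rhs X = .horiz Y Z ∨ rhs X = .vert Y Z) :
    rank Y < rank X ∧ rank Z < rank X := by
  rcases X with ⟨a, ⟨_ | k, hk⟩⟩ | ⟨_ | k, hk⟩ | ⟨b, k⟩ | _ <;>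
    simp only [rhs, reduceCtorEq, Rhs2.horiz.injEq, Rhs2.vert.injEq, or_false, false_or] at h <;>
    obtain ⟨rfl, rfl⟩ := h <;> simp only [rank, Fin.val_castSucc, Fin.val_last] <;> omega

def exp : BinNT n → Str2 Alpha3
  | col a k => Str2.column a (2 ^ (k : ℕ))
  | block k => binBlock k
  | pre b k => (Str2.column (Alpha3.ofBool b) (2 ^ (k : ℕ))).hcat (binBlock k)
  | start => binStr n

theorem exp_eq_eval (X : BinNT n) : exp X = (rhs X).eval exp := by
  rcases X with ⟨a, ⟨_ | k, hk⟩⟩ | ⟨_ | k, hk⟩ | ⟨b, k⟩ | _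
  · rfl
  · simp only [exp, rhs, Rhs2.eval, Str2.column_vcat_column, pow_succ, mul_two]
  · exact binBlock_zero
  · exact binBlock_succ k
  · rfl
  · exact binStr_eq_column_hcat_binBlock n

end BinNT

def binSLP (n : ℕ) : SLP2 Alpha3 where
  V := BinNT n
  fintypeV := inferInstance
  start := .start
  rhs := BinNT.rhs
  rank := BinNT.rank
  rank_horiz h := BinNT.rank_lt_of_rhs (.inl h)
  rank_vert h := BinNT.rank_lt_of_rhs (.inr h)

theorem binSLP_expNT (n : ℕ) : (binSLP n).expNT = BinNT.exp :=
  (binSLP n).expNT_eq_of_eval BinNT.exp_eq_eval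

theorem binSLP_exp (n : ℕ) : (binSLP n).exp = binStr n :=
  congrFun (binSLP_expNT n) .start

theorem binSLP_wf (n : ℕ) : (binSLP n).WF := by
  intro X
  simp only [binSLP_expNT]
  rcases X with ⟨a, ⟨_ | k, hk⟩⟩ | ⟨_ | k, hk⟩ | ⟨b, k⟩ | _ <;>
    first | exact (trivial : True) | rfl

theorem binSLP_size (n : ℕ) : (binSLP n).size ≤ 12 * n + 10 := by
  have hcard : (binSLP n).numNT = 6 * n + 5 := BinNT.card_eq
  have := (binSLP n).size_le_two_mul_numNT
  omega

/-- There is an absolute constant `c > 0` such that for every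
`n ≥ 1` and `N = 2^n`, there is a 2D SLP of size at most `c * n` deriving the
2D string `Bin_N`. -/
theorem bin_small_slp :
    ∃ c : ℕ, 0 < c ∧ ∀ n : ℕ, 1 ≤ n →
      ∃ G : SLP2 Alpha3, G.WF ∧ G.exp = binStr n ∧ G.size ≤ c * n := by
  refine ⟨22, by norm_num, fun n hn => ⟨binSLP n, binSLP_wf n, binSLP_exp n, ?_⟩⟩
  have := binSLP_size n
  omega
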